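/- Let f : X → Y be a uniformly continuous surjection between metric spaces and let 0 < δ < ε. Then f is (ε,δ)-refining if and only if for every δ-chain β in Y from a to b, every a' ∈ f⁻¹(a), every b' ∈ f⁻¹(b), and every κ > 0, there is a κ-chain α in X from a' to b' with [f(α)]_ε = [β]_ε. -/

import Mathlib

/-! Refine a δ-chain link by link: each link `[x, y]` lifts to an arbitrarily fine chain whose
image is ε-homotopic to `[x, y]`, with surjectivity providing a preimage of every intermediate
point. Fine chains meeting at a common point concatenate, and ε-homotopy is compatible with
concatenation at a common point, so the homotopies of the links glue to one for the whole chain.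
The converse is the case of a two-point chain. -/

namespace WC

/-- A chain for the relation `R`: consecutive entries of the list satisfy `R`. -/
def IsChain {Y : Type*} (R : Y → Y → Prop) (α : List Y) : Prop :=
  List.Chain' R α

/-- A basic move between chains: adding or removing a single point other than an
endpoint (the first and last points, as values, are unchanged). -/
def Move {Y : Type*} (R : Y → Y → Prop) (α β : List Y) : Prop :=
  IsChain R α ∧ IsChain R β ∧ α.head? = β.head? ∧ α.getLast? = β.getLast? ∧
    ∃ (γ δ : List Y) (x : Y),
      (α = γ ++ δ ∧ β = γ ++ x :: δ) ∨ (β = γ ++ δ ∧ α = γ ++ x :: δ)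

/-- Two chains are homotopic (relative to `R`) if they are connected by a finite
sequence of basic moves. -/
def Homotopic {Y : Type*} (R : Y → Y → Prop) : List Y → List Y → Prop :=
  Relation.ReflTransGen (Move R)

/-- The chain `α` starts at `x` and ends at `y`. -/
def FromTo {Y : Type*} (α : List Y) (x y : Y) : Prop :=
  α.head? = some x ∧ α.getLast? = some y

end WC
/-- The relation "distance less than `ε`" on a metric space. -/
def MRel {X : Type*} [MetricSpace X] (ε : ℝ) : X → X → Prop :=
  fun x y => dist x y < ε

/-- An `ε`-chain in a metric space. -/
def MChain {X : Type*} [MetricSpace X] (ε : ℝ) (α : List X) : Prop :=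
  WC.IsChain (MRel ε) α

/-- `ε`-homotopy of chains in a metric space. -/
def MHomotopic {X : Type*} [MetricSpace X] (ε : ℝ) : List X → List X → Prop :=
  WC.Homotopic (MRel ε)

/-- A metric space is chain connected if any two points are joined by an
`ε`-chain for every `ε > 0`. -/
def ChainConnected (X : Type*) [MetricSpace X] : Prop :=
  ∀ ε : ℝ, 0 < ε → ∀ x y : X, ∃ α : List X, MChain ε α ∧ WC.FromTo α x y

/-- A metric space is weakly chained if it is chain connected and for every
`ε > 0` there is `δ > 0` such that any two points at distance `< δ` are joined
by arbitrarily fine chains that are `ε`-homotopic to the two-point chain formed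
by those points. -/
def WeaklyChained (X : Type*) [MetricSpace X] : Prop :=
  ChainConnected X ∧
    ∀ ε : ℝ, 0 < ε → ∃ δ : ℝ, 0 < δ ∧ ∀ x y : X, dist x y < δ →
      ∀ κ : ℝ, 0 < κ → ∃ α : List X, MChain κ α ∧ WC.FromTo α x y ∧
        MHomotopic ε α [x, y]

/-- `f` is `(ε,δ)`-refining: whenever `d(a,b) < δ` in `Y` and `a', b'` are
preimages of `a, b`, there are arbitrarily fine chains `α` from `a'` to `b'`
with `[f(α)]_ε = [a,b]_ε`. -/
def Refining {X Y : Type*} [MetricSpace X] [MetricSpace Y] (f : X → Y)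
    (ε δ : ℝ) : Prop :=
  ∀ a b : Y, dist a b < δ → ∀ a' b' : X, f a' = a → f b' = b →
    ∀ κ : ℝ, 0 < κ → ∃ α : List X, MChain κ α ∧ WC.FromTo α a' b' ∧
      MHomotopic ε (α.map f) [a, b]

namespace WC

variable {Y : Type*} {R : Y → Y → Prop}

theorem Move.symm {α β : List Y} (h : Move R α β) : Move R β α := by
  obtain ⟨hα, hβ, hhead, hlast, γ, δ, x, hsplit⟩ := h
  exact ⟨hβ, hα, hhead.symm, hlast.symm, γ, δ, x, hsplit.symm⟩

theorem Move.ne_nil {α β : List Y} (h : Move R α β) : α ≠ [] := by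
  rintro rfl
  obtain ⟨-, -, hhead, -, γ, δ, x, ⟨-, rfl⟩ | ⟨-, hnil⟩⟩ := h
  · cases γ <;> simp at hhead
  · cases γ <;> simp at hnil

theorem Homotopic.symm {α β : List Y} (h : Homotopic R α β) : Homotopic R β α := by
  induction h with
  | refl => exact .refl
  | tail _ hmove ih => exact .head hmove.symm ih

theorem Homotopic.head?_eq {α β : List Y} (h : Homotopic R α β) : α.head? = β.head? := by
  induction h with
  | refl => rfl
  | tail _ hmove ih => exact ih.trans hmove.2.2.1

theorem Homotopic.getLast?_eq {α β : List Y} (h : Homotopic R α β) :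
    α.getLast? = β.getLast? := by
  induction h with
  | refl => rfl
  | tail _ hmove ih => exact ih.trans hmove.2.2.2.1

theorem Homotopic.isChain {α β : List Y} (h : Homotopic R α β) (hα : IsChain R α) :
    IsChain R β := by
  induction h with
  | refl => exact hα
  | tail _ hmove _ => exact hmove.2.1

theorem Move.append_left {q q' : List Y} (s : List Y) (h : Move R q q')
    (hsq : IsChain R (s ++ q)) (hsq' : IsChain R (s ++ q')) :
    Move R (s ++ q) (s ++ q') := by
  have hq := h.ne_nil
  have hq' := h.symm.ne_nil
  obtain ⟨-, -, hhead, hlast, γ, δ, x, hsplit⟩ := h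
  refine ⟨hsq, hsq', ?_, ?_, s ++ γ, δ, x, ?_⟩
  · cases s <;> simp_all
  · rw [List.getLast?_append_of_ne_nil s hq, List.getLast?_append_of_ne_nil s hq', hlast]
  · rcases hsplit with ⟨rfl, rfl⟩ | ⟨rfl, rfl⟩ <;> simp

theorem Move.append_right {p p' : List Y} (t : List Y) (h : Move R p p')
    (hpt : IsChain R (p ++ t)) (hp't : IsChain R (p' ++ t)) :
    Move R (p ++ t) (p' ++ t) := by
  have hp := h.ne_nil
  have hp' := h.symm.ne_nil
  obtain ⟨-, -, hhead, hlast, γ, δ, x, hsplit⟩ := h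
  refine ⟨hpt, hp't, ?_, ?_, γ, δ ++ t, x, ?_⟩
  · rw [List.head?_append_of_ne_nil _ hp, List.head?_append_of_ne_nil _ hp', hhead]
  · cases t using List.reverseRecOn <;> simp_all
  · rcases hsplit with ⟨rfl, rfl⟩ | ⟨rfl, rfl⟩ <;> simp

theorem IsChain.append_of_getLast?_eq {p p' t : List Y} (hpt : IsChain R (p ++ t))
    (hp' : IsChain R p') (hlast : p'.getLast? = p.getLast?) : IsChain R (p' ++ t) := by
  obtain ⟨-, ht, hlink⟩ := List.isChain_append.1 hpt
  exact hp'.append ht (hlast ▸ hlink)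

theorem IsChain.append_of_head?_eq {s q q' : List Y} (hsq : IsChain R (s ++ q))
    (hq' : IsChain R q') (hhead : q'.head? = q.head?) : IsChain R (s ++ q') := by
  obtain ⟨hs, -, hlink⟩ := List.isChain_append.1 hsq
  exact hs.append hq' (hhead ▸ hlink)

theorem Homotopic.append_left {q q' : List Y} (s : List Y) (h : Homotopic R q q')
    (hsq : IsChain R (s ++ q)) : Homotopic R (s ++ q) (s ++ q') := by
  induction h with
  | refl => exact .refl
  | tail hqb hmove ih =>
    exact ih.tail <| hmove.append_left s
      (hsq.append_of_head?_eq hmove.1 (Homotopic.head?_eq hqb).symm)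
      (hsq.append_of_head?_eq hmove.2.1 ((Homotopic.head?_eq hqb).trans hmove.2.2.1).symm)

theorem Homotopic.append_right {p p' : List Y} (t : List Y) (h : Homotopic R p p')
    (hpt : IsChain R (p ++ t)) : Homotopic R (p ++ t) (p' ++ t) := by
  induction h with
  | refl => exact .refl
  | tail hpb hmove ih =>
    exact ih.tail <| hmove.append_right t
      (hpt.append_of_getLast?_eq hmove.1 (Homotopic.getLast?_eq hpb).symm)
      (hpt.append_of_getLast?_eq hmove.2.1
        ((Homotopic.getLast?_eq hpb).trans hmove.2.2.2.1).symm)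

theorem Homotopic.append_overlap {p p' q q' : List Y} {m : Y}
    (hp : Homotopic R (p ++ [m]) (p' ++ [m])) (hq : Homotopic R (m :: q) (m :: q'))
    (hp' : IsChain R (p' ++ [m])) (hq' : IsChain R (m :: q')) :
    Homotopic R (p ++ m :: q) (p' ++ m :: q') := by
  have hpmq : IsChain R (p ++ [m] ++ q) :=
    List.IsChain.append_overlap (hp.symm.isChain hp') (hq.symm.isChain hq') (by simp)
  have hstart := hp.append_right q hpmq
  simp only [List.append_assoc, List.singleton_append] at hpmq hstart
  exact hstart.trans (hq.append_left p' (hstart.isChain hpmq))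

theorem Homotopic.pair_self {a : Y} (h : R a a) : Homotopic R [a, a] [a] :=
  .single ⟨List.isChain_pair.mpr h, List.isChain_singleton a, rfl, rfl, [a], [], a,
    .inr ⟨rfl, rfl⟩⟩

end WC

theorem MChain.mono {X : Type*} [MetricSpace X] {δ ε : ℝ} {α : List X} (h : MChain δ α)
    (hδε : δ ≤ ε) : MChain ε α :=
  List.IsChain.imp (fun _ _ hxy => lt_of_lt_of_le hxy hδε) h

theorem Refining.exists_chain_homotopic {X Y : Type*} [MetricSpace X] [MetricSpace Y]
    {f : X → Y} {ε δ : ℝ} (hr : Refining f ε δ) (hsurj : Function.Surjective f)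
    (hδ : 0 < δ) (hδε : δ < ε) {β : List Y} (hβ : MChain δ β) {a b : Y}
    (hab : WC.FromTo β a b) {a' b' : X} (ha' : f a' = a) (hb' : f b' = b) {κ : ℝ}
    (hκ : 0 < κ) :
    ∃ α : List X, MChain κ α ∧ WC.FromTo α a' b' ∧ MHomotopic ε (α.map f) β := by
  induction β generalizing a a' with
  | nil => simp [WC.FromTo] at hab
  | cons x t ih =>
    obtain rfl : x = a := by simpa [WC.FromTo] using hab.1
    cases t with
    | nil =>
      -- a one-point chain `[x]` is reached from the link `[x, x]` by removing a repeated point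
      obtain rfl : x = b := by simpa [WC.FromTo] using hab.2
      obtain ⟨α, hακ, hα, hαx⟩ := hr x x (by simpa using hδ) a' b' ha' hb' κ hκ
      have hxx : MRel ε x x := by simpa [MRel] using hδ.trans hδε
      exact ⟨α, hακ, hα, hαx.trans (WC.Homotopic.pair_self hxx)⟩
    | cons y t =>
      obtain ⟨hxy, hβ'⟩ := List.isChain_cons_cons.mp hβ
      obtain ⟨y', rfl⟩ := hsurj y
      obtain ⟨α₁, hκ₁, hα₁, hh₁⟩ := hr x (f y') hxy a' y' ha' rfl κ hκ
      obtain ⟨α₂, hκ₂, hα₂, hh₂⟩ :=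
        ih hβ' ⟨rfl, by simpa [WC.FromTo] using hab.2⟩ rfl
      obtain ⟨α₁, rfl⟩ : ∃ l, α₁ = l ++ [y'] :=
        ⟨_, (List.dropLast_append_getLast? _ hα₁.2).symm⟩
      obtain ⟨α₂, rfl⟩ := List.head?_eq_some_iff.mp hα₂.1
      refine ⟨α₁ ++ y' :: α₂, ?_, ?_, ?_⟩
      · have hchain := List.IsChain.append_overlap hκ₁ hκ₂ (List.cons_ne_nil y' [])
        rwa [List.append_assoc, List.singleton_append] at hchain
      · simp_all [WC.FromTo]
      · simp only [List.map_append, List.map_cons, List.map_nil] at hh₁ hh₂ ⊢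
        exact WC.Homotopic.append_overlap (p' := [x]) hh₁ hh₂
          (List.isChain_pair.mpr (hxy.trans hδε)) (MChain.mono hβ' hδε.le)

theorem refining_iff_chains_general {X Y : Type*} [MetricSpace X] [MetricSpace Y]
    (f : X → Y) (hsurj : Function.Surjective f)
    (ε δ : ℝ) (hδ : 0 < δ) (hδε : δ < ε) :
    Refining f ε δ ↔
      ∀ β : List Y, MChain δ β → ∀ a b : Y, WC.FromTo β a b →
        ∀ a' b' : X, f a' = a → f b' = b → ∀ κ : ℝ, 0 < κ →
          ∃ α : List X, MChain κ α ∧ WC.FromTo α a' b' ∧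
            MHomotopic ε (α.map f) β := by
  constructor
  · intro hr β hβ a b hab a' b' ha' hb' κ hκ
    exact hr.exists_chain_homotopic hsurj hδ hδε hβ hab ha' hb' hκ
  · intro h a b hab a' b' ha' hb' κ hκ
    exact h [a, b] (List.isChain_pair.mpr hab) a b ⟨rfl, rfl⟩ a' b' ha' hb' κ hκ

/-- A uniformly continuous surjection `f : X → Y` between
metric spaces is `(ε,δ)`-refining (`0 < δ < ε`) iff for every `δ`-chain `β` in
`Y` from `a` to `b`, all preimages `a'` of `a` and `b'` of `b` are joined by
arbitrarily fine chains `α` with `[f(α)]_ε = [β]_ε`. -/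
theorem refining_iff_chains {X Y : Type*} [MetricSpace X] [MetricSpace Y]
    (f : X → Y) (hf : UniformContinuous f) (hsurj : Function.Surjective f)
    (ε δ : ℝ) (hδ : 0 < δ) (hδε : δ < ε) :
    Refining f ε δ ↔
      ∀ β : List Y, MChain δ β → ∀ a b : Y, WC.FromTo β a b →
        ∀ a' b' : X, f a' = a → f b' = b → ∀ κ : ℝ, 0 < κ →
          ∃ α : List X, MChain κ α ∧ WC.FromTo α a' b' ∧
            MHomotopic ε (α.map f) β :=
  refining_iff_chains_general f hsurj ε δ hδ hδε
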